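/- arXiv:2002.01848 — 3 statements merged into one kernel-verified Lean document; each statement's English description precedes it below -/
import Mathlib

section
/- Let A be a commutative ring, P = A[T₁,…,Tₙ] the polynomial ring, f₁,…,fₙ ∈ P, and B = P/(f₁,…,fₙ). Let a_{ij} ∈ P ⊗_A P (1 ≤ i, j ≤ n) be any elements satisfying f_i⊗1 − 1⊗f_i = Σ_j a_{ij}·(T_j⊗1 − 1⊗T_j) (such elements exist), let Δ ∈ B ⊗_A B denote the image of det((a_{ij})_{i,j}), and let μ : B ⊗_A B → B be the multiplication map. Then μ(Δ) equals the image in B of the Jacobian determinant det((∂f_i/∂T_j)_{i,j}) ∈ P. -/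
open TensorProduct

section Aux

variable (A : Type) [CommRing A] (n : ℕ)

/-- The derivation-like map `p ⊗ q ↦ p * ∂q/∂Tⱼ`. -/
noncomputable def Lmap (j : Fin n) :
    MvPolynomial (Fin n) A ⊗[A] MvPolynomial (Fin n) A →ₗ[A] MvPolynomial (Fin n) A :=
  (Algebra.TensorProduct.lmul' A (S := MvPolynomial (Fin n) A)).toLinearMap ∘ₗ
    TensorProduct.map LinearMap.id (MvPolynomial.pderiv j).toLinearMap

@[simp] lemma Lmap_tmul (j : Fin n) (p q : MvPolynomial (Fin n) A) :
    Lmap A n j (p ⊗ₜ[A] q) = p * MvPolynomial.pderiv j q := rfl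

lemma Lmap_mul_X (j k : Fin n)
    (z : MvPolynomial (Fin n) A ⊗[A] MvPolynomial (Fin n) A) :
    Lmap A n j (z * ((MvPolynomial.X k) ⊗ₜ[A] 1 - 1 ⊗ₜ[A] (MvPolynomial.X k)))
      = -(if k = j then Algebra.TensorProduct.lmul' A z else 0) := by
  induction z using TensorProduct.induction_on with
  | zero => simp
  | tmul p q =>
      rw [mul_sub]
      simp only [Algebra.TensorProduct.tmul_mul_tmul, mul_one, one_mul, map_sub, Lmap_tmul,
        Derivation.leibniz, MvPolynomial.pderiv_X, smul_eq_mul,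
        Algebra.TensorProduct.lmul'_apply_tmul]
      by_cases h : k = j <;> simp [h, Pi.single_apply] <;> ring
  | add x y hx hy =>
      rw [add_mul, map_add, hx, hy, map_add]
      by_cases h : k = j <;> simp [h] <;> ring

end Aux

/-- Let `A` be a commutative ring, `P = A[T₁,…,Tₙ]`, `f₁,…,fₙ ∈ P` and
`B = P/(f₁,…,fₙ)`.  If `a_{ij} ∈ P ⊗[A] P` satisfy
`fᵢ ⊗ 1 − 1 ⊗ fᵢ = Σⱼ a_{ij} · (Tⱼ ⊗ 1 − 1 ⊗ Tⱼ)`, `Δ ∈ B ⊗[A] B` is the image of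
`det (a_{ij})` and `μ : B ⊗[A] B → B` is the multiplication map, then `μ(Δ)` equals the image
in `B` of the Jacobian determinant `det (∂fᵢ/∂Tⱼ)`. -/
theorem statement3 (A : Type) [CommRing A] (n : ℕ)
    (f : Fin n → MvPolynomial (Fin n) A)
    (I : Ideal (MvPolynomial (Fin n) A)) (hI : I = Ideal.span (Set.range f))
    (a : Fin n → Fin n → (MvPolynomial (Fin n) A ⊗[A] MvPolynomial (Fin n) A))
    (ha : ∀ i, (f i) ⊗ₜ[A] (1 : MvPolynomial (Fin n) A)
          - (1 : MvPolynomial (Fin n) A) ⊗ₜ[A] (f i)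
        = ∑ j, a i j * ((MvPolynomial.X j) ⊗ₜ[A] (1 : MvPolynomial (Fin n) A)
          - (1 : MvPolynomial (Fin n) A) ⊗ₜ[A] (MvPolynomial.X j))) :
    Algebra.TensorProduct.lmul' A
        (Algebra.TensorProduct.map (Ideal.Quotient.mkₐ A I) (Ideal.Quotient.mkₐ A I)
          (Matrix.det (Matrix.of a)))
      = Ideal.Quotient.mk I
          (Matrix.det (Matrix.of fun i j => MvPolynomial.pderiv j (f i))) := by
  -- key: μ(a i j) = ∂ⱼ f i
  have key : ∀ i j, Algebra.TensorProduct.lmul' A (a i j) = MvPolynomial.pderiv j (f i) := by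
    intro i j
    have h := congrArg (Lmap A n j) (ha i)
    simp only [map_sub, map_sum, Lmap_tmul, Lmap_mul_X, map_one, MvPolynomial.pderiv_one,
      mul_zero, one_mul, Finset.sum_ite_eq, Finset.mem_univ, if_true] at h
    have h' : ∑ x : Fin n, -(if x = j then Algebra.TensorProduct.lmul' A (a i x) else 0)
        = -(Algebra.TensorProduct.lmul' A (a i j)) := by simp
    rw [h'] at h
    linear_combination h
  have comp : ∀ x : MvPolynomial (Fin n) A ⊗[A] MvPolynomial (Fin n) A,
      Algebra.TensorProduct.lmul' A
        (Algebra.TensorProduct.map (Ideal.Quotient.mkₐ A I) (Ideal.Quotient.mkₐ A I) x)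
      = Ideal.Quotient.mk I (Algebra.TensorProduct.lmul' A x) := by
    intro x
    induction x using TensorProduct.induction_on with
    | zero => simp
    | tmul p q =>
        simp [Algebra.TensorProduct.map_tmul, Algebra.TensorProduct.lmul'_apply_tmul,
          Ideal.Quotient.mkₐ_eq_mk, map_mul]
    | add x y hx hy => simp [map_add, hx, hy]
  rw [comp, AlgHom.map_det]
  have hm : ((Matrix.of a).map (Algebra.TensorProduct.lmul' A))
      = Matrix.of fun i j => MvPolynomial.pderiv j (f i) := by
    ext i j
    simp [Matrix.map_apply, key]
  rw [AlgHom.mapMatrix_apply, hm]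
end

section
/- Let R be a commutative ring and (M, φ) a symmetric bilinear space over R. Then the following are equivalent: (1) (M, φ) is metabolic, i.e., there exists a direct summand N ⊆ M with N = N^⊥; (2) M contains an isotropic direct summand of half rank, i.e., there exists a direct summand N ⊆ M with φ(N, N) = 0 and such that for every prime ideal p of R, the rank of the free R_p-module M_p is twice the rank of N_p. -/
open TensorProduct

universe u

/-- A symmetric bilinear space over a commutative ring `R`: a finitely generated projective
`R`-module together with a symmetric bilinear form inducing an isomorphism onto the dual. -/
structure SymBilSpace (R : Type u) [CommRing R] : Type (u + 1) where
  M : Type u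
  [isAddCommGroup : AddCommGroup M]
  [isModule : Module R M]
  projective : Module.Projective R M
  finite : Module.Finite R M
  form : M →ₗ[R] M →ₗ[R] R
  symm : ∀ x y, form x y = form y x
  nondeg : Function.Bijective fun x ↦ form x

attribute [instance] SymBilSpace.isAddCommGroup SymBilSpace.isModule

namespace SymBilSpace

variable {R : Type u} [CommRing R]

/-- Isometry of symmetric bilinear spaces. -/
def Isometric (V W : SymBilSpace R) : Prop :=
  ∃ e : V.M ≃ₗ[R] W.M, ∀ x y, W.form (e x) (e y) = V.form x y

/-- Orthogonal direct sum of symmetric bilinear spaces. -/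
noncomputable def orthSum (V W : SymBilSpace R) : SymBilSpace R where
  M := V.M × W.M
  projective := by have := V.projective; have := W.projective; infer_instance
  finite := by have := V.finite; have := W.finite; infer_instance
  form := V.form.compl₁₂ (LinearMap.fst R V.M W.M) (LinearMap.fst R V.M W.M)
        + W.form.compl₁₂ (LinearMap.snd R V.M W.M) (LinearMap.snd R V.M W.M)
  symm := by
    intro x y
    simp only [LinearMap.add_apply, LinearMap.compl₁₂_apply, LinearMap.fst_apply,
      LinearMap.snd_apply]
    rw [V.symm x.1 y.1, W.symm x.2 y.2]
  nondeg := by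
    have key : (fun x ↦ (V.form.compl₁₂ (LinearMap.fst R V.M W.M) (LinearMap.fst R V.M W.M)
          + W.form.compl₁₂ (LinearMap.snd R V.M W.M) (LinearMap.snd R V.M W.M)) x)
        = (Module.dualProdDualEquivDual R V.M W.M) ∘
            (Prod.map (fun x ↦ V.form x) (fun y ↦ W.form y)) := by
      funext x
      ext y
      · simp [Module.dualProdDualEquivDual]
      · simp [Module.dualProdDualEquivDual]
    rw [key]
    exact (Module.dualProdDualEquivDual R V.M W.M).bijective.comp
      (V.nondeg.prodMap W.nondeg)

/-- The rank one symmetric bilinear space `⟨a⟩` associated to a unit `a`, given by the form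
`(x, y) ↦ a * x * y` on `R`. -/
noncomputable def unit (R : Type u) [CommRing R] (a : Rˣ) : SymBilSpace R where
  M := R
  projective := inferInstance
  finite := inferInstance
  form := LinearMap.mk₂ R (fun x y => (a : R) * x * y)
    (fun x x' y => by ring) (fun c x y => by simp [smul_eq_mul]; ring)
    (fun x y y' => by ring) (fun c x y => by simp [smul_eq_mul]; ring)
  symm := fun x y => by simp [LinearMap.mk₂_apply]; ring
  nondeg := by
    constructor
    · intro x y h
      have h1 : (a : R) * x * 1 = (a : R) * y * 1 := by
        have := congrArg (fun f : R →ₗ[R] R => f 1) h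
        simpa [LinearMap.mk₂_apply] using this
      have h2 : (a : R) * x = (a : R) * y := by simpa using h1
      calc x = (a⁻¹ : Rˣ) * ((a : R) * x) := by
                rw [← mul_assoc, Units.inv_mul, one_mul]
        _ = (a⁻¹ : Rˣ) * ((a : R) * y) := by rw [h2]
        _ = y := by rw [← mul_assoc, Units.inv_mul, one_mul]
    · intro f
      refine ⟨(a⁻¹ : Rˣ) * f 1, ?_⟩
      apply LinearMap.ext
      intro y
      have : f y = y * f 1 := by
        conv_lhs => rw [← mul_one y, ← smul_eq_mul, map_smul, smul_eq_mul]
      simp only [LinearMap.mk₂_apply]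
      rw [this]
      rw [show (a : R) * ((a⁻¹ : Rˣ) * f 1) * y = ((a : R) * (a⁻¹ : Rˣ)) * (f 1 * y) by ring,
        Units.mul_inv, one_mul, mul_comm]

/-- The hyperbolic plane over `R`: `R²` with the form of Gram matrix `[[0,1],[1,0]]`. -/
noncomputable def hyperbolic (R : Type u) [CommRing R] : SymBilSpace R where
  M := R × R
  projective := inferInstance
  finite := inferInstance
  form := LinearMap.mk₂ R (fun x y => x.1 * y.2 + x.2 * y.1)
    (fun x x' y => by simp [Prod.fst_add, Prod.snd_add]; ring)
    (fun c x y => by simp [Prod.smul_fst, Prod.smul_snd, smul_eq_mul]; ring)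
    (fun x y y' => by simp [Prod.fst_add, Prod.snd_add]; ring)
    (fun c x y => by simp [Prod.smul_fst, Prod.smul_snd, smul_eq_mul]; ring)
  symm := fun x y => by simp [LinearMap.mk₂_apply]; ring
  nondeg := by
    constructor
    · intro x y h
      have h1 := congrArg (fun f : R × R →ₗ[R] R => f (1, 0)) h
      have h2 := congrArg (fun f : R × R →ₗ[R] R => f (0, 1)) h
      simp only [LinearMap.mk₂_apply, mul_zero, mul_one, zero_add, add_zero] at h1 h2
      exact Prod.ext h2 h1
    · intro f
      refine ⟨(f (0, 1), f (1, 0)), ?_⟩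
      apply LinearMap.ext
      intro y
      have hy : y = y.1 • ((1 : R), (0 : R)) + y.2 • ((0 : R), (1 : R)) := by
        ext <;> simp
      have hfy : f y = y.1 * f (1, 0) + y.2 * f (0, 1) := by
        conv_lhs => rw [hy]
        rw [map_add, map_smul, map_smul, smul_eq_mul, smul_eq_mul]
      simp only [LinearMap.mk₂_apply]
      rw [hfy]
      ring

end SymBilSpace

/-- The defining relations of the Grothendieck-Witt group: the class of an orthogonal sum is
the sum of the classes, and isometric spaces have equal classes. -/
def gwRelation (R : Type u) [CommRing R] :
    FreeAbelianGroup (SymBilSpace R) → FreeAbelianGroup (SymBilSpace R) → Prop := fun x y =>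
  (∃ V W : SymBilSpace R, x = FreeAbelianGroup.of (V.orthSum W) ∧
      y = FreeAbelianGroup.of V + FreeAbelianGroup.of W) ∨
  (∃ V W : SymBilSpace R, V.Isometric W ∧ x = FreeAbelianGroup.of V ∧
      y = FreeAbelianGroup.of W)

/-- The additive congruence generated by the Grothendieck-Witt relations. -/
def gwCon (R : Type u) [CommRing R] : AddCon (FreeAbelianGroup (SymBilSpace R)) :=
  addConGen (gwRelation R)

/-- The Grothendieck-Witt group of a commutative ring: the group completion of the monoid of
isometry classes of symmetric bilinear spaces under orthogonal direct sum. -/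
def GW (R : Type u) [CommRing R] : Type (u + 1) := (gwCon R).Quotient

noncomputable instance (R : Type u) [CommRing R] : AddCommGroup (GW R) :=
  { (inferInstance : AddGroup ((gwCon R).Quotient)) with
    add_comm := fun a b => AddCon.induction_on₂ a b fun x y => by
      show ((x + y : FreeAbelianGroup (SymBilSpace R)) : (gwCon R).Quotient) = ↑(y + x)
      rw [add_comm] }

/-- The Grothendieck-Witt class of a symmetric bilinear space. -/
def GWclass {R : Type u} [CommRing R] (V : SymBilSpace R) : GW R :=
  (gwCon R).mk' (FreeAbelianGroup.of V)

/-- The orthogonal complement of a submodule with respect to a bilinear form. -/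
def orthComp {R : Type u} [CommRing R] {M : Type u} [AddCommGroup M] [Module R M]
    (φ : M →ₗ[R] M →ₗ[R] R) (N : Submodule R M) : Submodule R M where
  carrier := {m | ∀ n ∈ N, φ m n = 0}
  add_mem' := fun {x y} hx hy => by
    intro n hn
    simp [hx n hn, hy n hn]
  zero_mem' := by intro n hn; simp
  smul_mem' := fun c x hx => by
    intro n hn
    simp [hx n hn]

/-- A bilinear pairing between two modules is perfect if both induced maps to the duals
are bijective. -/
def IsPerfect {R : Type u} [CommRing R] {P Q : Type u} [AddCommGroup P] [Module R P]
    [AddCommGroup Q] [Module R Q] (β : P →ₗ[R] Q →ₗ[R] R) : Prop :=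
  (Function.Bijective fun x ↦ β x) ∧ (Function.Bijective fun y ↦ β.flip y)

/-- The hyperbolic-type symmetric bilinear space on `P ⊕ Q` associated to a perfect pairing
`β : P × Q → R`, with form `((x,y),(x',y')) ↦ β x y' + β x' y`. -/
noncomputable def hypPair {R : Type u} [CommRing R] {P Q : Type u} [AddCommGroup P] [Module R P]
    [AddCommGroup Q] [Module R Q] (hP : Module.Projective R P) (hP' : Module.Finite R P)
    (hQ : Module.Projective R Q) (hQ' : Module.Finite R Q)
    (β : P →ₗ[R] Q →ₗ[R] R) (hβ : IsPerfect β) : SymBilSpace R where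
  M := P × Q
  projective := by infer_instance
  finite := by infer_instance
  form := β.compl₁₂ (LinearMap.fst R P Q) (LinearMap.snd R P Q)
        + β.flip.compl₁₂ (LinearMap.snd R P Q) (LinearMap.fst R P Q)
  symm := by
    intro x y
    simp only [LinearMap.add_apply, LinearMap.compl₁₂_apply, LinearMap.fst_apply,
      LinearMap.snd_apply, LinearMap.flip_apply]
    exact add_comm _ _
  nondeg := by
    have key : (fun x ↦ (β.compl₁₂ (LinearMap.fst R P Q) (LinearMap.snd R P Q)
          + β.flip.compl₁₂ (LinearMap.snd R P Q) (LinearMap.fst R P Q)) x)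
        = (Module.dualProdDualEquivDual R P Q) ∘
            (Prod.map (fun y ↦ β.flip y) (fun x ↦ β x)) ∘ ⇑(Equiv.prodComm P Q) := by
      funext x
      ext y
      · simp [Module.dualProdDualEquivDual]
      · simp [Module.dualProdDualEquivDual]
    rw [key]
    exact (Module.dualProdDualEquivDual R P Q).bijective.comp
      ((hβ.2.prodMap hβ.1).comp (Equiv.prodComm P Q).bijective)


/-!
For a direct summand `N ⊆ M`, the map `M → N^*`, `m ↦ φ(m, -)|_N`, is surjective (extend a
functional by zero on a complement and use nondegeneracy) with kernel `N^⊥`; as `N^*` is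
projective it splits, so `M ≅ N^⊥ ⊕ N^*` and `rank_p M = rank_p N^⊥ + rank_p N` at every prime.
Hence `N = N^⊥` gives half rank. Conversely, an isotropic `N` of half rank satisfies `N ⊆ N^⊥`
with `rank_p N^⊥ = rank_p N`; the projection `N^⊥ → N` along a complement of `N` is then a
surjection between finite flat modules of equal local ranks, hence injective, so `N = N^⊥`.
-/

open Module

section

variable {R : Type*} [CommRing R]

lemma Module.rankAtStalk_dual (N : Type*) [AddCommGroup N] [Module R N] [Module.Finite R N]
    [Module.Projective R N] : rankAtStalk (Dual R N) = rankAtStalk (R := R) N := by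
  ext ⟨p, _⟩
  let S := p.primeCompl
  let Rp := Localization.AtPrime p
  have : Module.FinitePresentation R N := Module.finitePresentation_of_projective R N
  have : Module.Free Rp (LocalizedModule S N) := free_of_flat_of_isLocalRing
  let e : LocalizedModule S (Dual R N) ≃ₗ[Rp] Dual Rp (LocalizedModule S N) :=
    (IsLocalizedModule.linearEquiv S (LocalizedModule.mkLinearMap S (Dual R N))
      (IsLocalizedModule.map S (LocalizedModule.mkLinearMap S N) (Algebra.linearMap R Rp)) ≪≫ₗ
      (LinearMap.extendScalarsOfIsLocalizationEquiv S Rp).restrictScalars R)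
      |>.extendScalarsOfIsLocalization S Rp
  let b := Free.chooseBasis Rp (LocalizedModule S N)
  rw [rankAtStalk, rankAtStalk, e.finrank_eq, finrank_eq_card_basis b.dualBasis,
    finrank_eq_card_basis b]

variable {M A B : Type*} [AddCommGroup M] [Module R M] [AddCommGroup A] [Module R A]
  [AddCommGroup B] [Module R B]

attribute [local instance] Module.free_of_flat_of_isLocalRing in
lemma Submodule.eq_of_le_of_rankAtStalk_eq {N K P : Submodule R M} (h : IsCompl N P)
    (hNK : N ≤ K) [Module.Finite R N] [Module.Flat R N] [Module.Finite R K] [Module.Flat R K]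
    (hrank : rankAtStalk (R := R) K = rankAtStalk N) : N = K := by
  let π : K →ₗ[R] N := N.projectionOnto P h ∘ₗ K.subtype
  have hπ : Function.Surjective π := fun n ↦
    ⟨⟨n, hNK n.2⟩, Submodule.projectionOnto_apply_left h n⟩
  have hπ_inj := (bijective_of_surjective_of_rankAtStalk_eq hπ fun m _ ↦ congrFun hrank _).1
  refine le_antisymm hNK fun x hx ↦ ?_
  have hx_eq : (N.projectionOnto P h x : M) = x := congrArg Subtype.val <|
    hπ_inj (a₁ := ⟨_, hNK (N.projectionOnto P h x).2⟩) (a₂ := ⟨x, hx⟩)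
      (Submodule.projectionOnto_apply_left h _)
  exact hx_eq ▸ (N.projectionOnto P h x).2

variable [Module.Finite R M] [Module.Projective R M]

lemma Module.finite_projective_of_equiv_prod (e : M ≃ₗ[R] A × B) :
    Module.Finite R A ∧ Module.Projective R A :=
  ⟨.of_surjective (LinearMap.fst R A B ∘ₗ e) fun a ↦ ⟨e.symm (a, 0), by simp⟩,
    .of_split (e.symm.toLinearMap ∘ₗ LinearMap.inl R A B) (LinearMap.fst R A B ∘ₗ e)
      (by ext; simp)⟩

lemma Submodule.finite_projective_of_isCompl {N P : Submodule R M} (h : IsCompl N P) :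
    Module.Finite R N ∧ Module.Projective R N :=
  finite_projective_of_equiv_prod (Submodule.prodEquivOfIsCompl N P h).symm

end

section

variable {R M : Type u} [CommRing R] [AddCommGroup M] [Module R M]
  {B : M →ₗ[R] M →ₗ[R] R} {N P : Submodule R M}

lemma LinearMap.ker_compl₂_subtype_eq_orthComp (B : M →ₗ[R] M →ₗ[R] R) (N : Submodule R M) :
    LinearMap.ker (B.compl₂ N.subtype) = orthComp B N := by
  ext m
  simp only [LinearMap.mem_ker, LinearMap.ext_iff, Subtype.forall]
  rfl

lemma LinearMap.compl₂_subtype_surjective (hB : Function.Surjective fun x ↦ B x)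
    (h : IsCompl N P) : Function.Surjective (B.compl₂ N.subtype) := by
  intro f
  obtain ⟨m, hm⟩ := hB (f ∘ₗ N.projectionOnto P h)
  refine ⟨m, LinearMap.ext fun n ↦ ?_⟩
  simp [show B m = _ from hm, Submodule.projectionOnto_apply_left]

variable [Module.Finite R M] [Module.Projective R M]

noncomputable def equivOrthCompProdDual (hB : Function.Surjective fun x ↦ B x)
    (h : IsCompl N P) : M ≃ₗ[R] orthComp B N × Dual R N :=
  have := (Submodule.finite_projective_of_isCompl h).1
  have := (Submodule.finite_projective_of_isCompl h).2
  have hsplit := Module.projective_lifting_property (B.compl₂ N.subtype) LinearMap.id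
    (B.compl₂_subtype_surjective hB h)
  ((LinearMap.exact_subtype_ker_map _).splitSurjectiveEquiv (Submodule.injective_subtype _)
    ⟨_, hsplit.choose_spec⟩).1 ≪≫ₗ
    (LinearEquiv.ofEq _ _ (B.ker_compl₂_subtype_eq_orthComp N)).prodCongr (.refl _ _)

lemma finite_projective_orthComp (hB : Function.Surjective fun x ↦ B x) (h : IsCompl N P) :
    Module.Finite R (orthComp B N) ∧ Module.Projective R (orthComp B N) :=
  finite_projective_of_equiv_prod (equivOrthCompProdDual hB h)

lemma rankAtStalk_orthComp_add (hB : Function.Surjective fun x ↦ B x) (h : IsCompl N P) :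
    rankAtStalk (orthComp B N) + rankAtStalk (R := R) N = rankAtStalk M := by
  obtain ⟨_, _⟩ := Submodule.finite_projective_of_isCompl h
  obtain ⟨_, _⟩ := finite_projective_orthComp hB h
  rw [rankAtStalk_eq_of_equiv (equivOrthCompProdDual hB h), rankAtStalk_prod, rankAtStalk_dual]

end

/-- **Statement 5.** A symmetric bilinear space `(M, φ)` over a commutative ring `R` is
metabolic (has a direct summand `N` with `N = N^⊥`) if and only if it contains an isotropic
direct summand of half rank, i.e. a direct summand `N` with `φ(N,N) = 0` such that for every
prime `p` the rank of `M_p` is twice the rank of `N_p`. -/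
theorem statement5 (R : Type) [CommRing R] (V : SymBilSpace R) :
    (∃ N : Submodule R V.M, (∃ P, IsCompl N P) ∧ N = orthComp V.form N) ↔
    (∃ N : Submodule R V.M, (∃ P, IsCompl N P) ∧
      (∀ x ∈ N, ∀ y ∈ N, V.form x y = 0) ∧
      ∀ (p : Ideal R) (_ : p.IsPrime),
        Module.finrank (Localization.AtPrime p) (LocalizedModule p.primeCompl V.M)
          = 2 * Module.finrank (Localization.AtPrime p) (LocalizedModule p.primeCompl N)) := by
  have := V.finite
  have := V.projective
  constructor
  · rintro ⟨N, ⟨P, h⟩, hN⟩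
    refine ⟨N, ⟨P, h⟩, fun x hx y hy ↦ hN.le hx y hy, fun p hp ↦ ?_⟩
    have hsum := congrFun (rankAtStalk_orthComp_add V.nondeg.2 h) ⟨p, hp⟩
    rw [← hN, Pi.add_apply] at hsum
    change rankAtStalk V.M ⟨p, hp⟩ = 2 * rankAtStalk N ⟨p, hp⟩
    omega
  · rintro ⟨N, ⟨P, h⟩, hiso, hrank⟩
    obtain ⟨_, _⟩ := Submodule.finite_projective_of_isCompl h
    obtain ⟨_, _⟩ := finite_projective_orthComp V.nondeg.2 h
    refine ⟨N, ⟨P, h⟩, Submodule.eq_of_le_of_rankAtStalk_eq h (fun x hx y hy ↦ hiso x hx y hy)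
      (funext fun p ↦ ?_)⟩
    have hsum := congrFun (rankAtStalk_orthComp_add V.nondeg.2 h) p
    have hhalf := hrank p.asIdeal p.isPrime
    rw [Pi.add_apply] at hsum
    change rankAtStalk V.M p = 2 * rankAtStalk N p at hhalf
    omega
end

section
/- Let R be a local commutative ring and (M, φ) a nonzero symmetric bilinear space over R (so M is free of some rank k ≥ 1). Then M admits an orthogonal basis, i.e., a basis e₁,…,e_k of M with φ(e_i, e_j) = 0 for all i ≠ j, if and only if there exists m ∈ M with φ(m, m) ∈ R^×. -/
open TensorProduct

universe u

/-!
Over a local ring a vector `e` with `φ(e, e)` a unit splits off: `M = R e ⊕ e^⊥` orthogonally,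
and `e^⊥` is again a symmetric bilinear space, so induction on the rank produces an orthogonal
basis as soon as each `e^⊥` has a vector of unit length. If `m^⊥` has none, pick `x, y ∈ m^⊥`
with `φ(x, y) = 1`; since `φ(x, x)` and `φ(y, y)` lie in the maximal ideal, `e = m + x` has
unit length and `y - φ(e, e)⁻¹ e ∈ e^⊥` has length `φ(y, y) - φ(e, e)⁻¹`, again a unit.
Conversely, in an orthogonal basis the dual vector of `b i` is a multiple of `b i`, which
forces `φ(b i, b i)` to be a unit.
-/

open Module LinearMap

attribute [local instance] Module.free_of_flat_of_isLocalRing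

theorem IsLocalRing.isUnit_add_of_not_isUnit {R : Type*} [CommRing R] [IsLocalRing R] {u a : R}
    (hu : IsUnit u) (ha : ¬IsUnit a) : IsUnit (u + a) := by
  by_contra h
  exact IsLocalRing.nonunits_add h (show -a ∈ nonunits R by simpa using ha) (by simpa using hu)

namespace LinearMap.BilinForm

variable {R M : Type*} [CommRing R] [AddCommGroup M] [Module R M] {B : LinearMap.BilinForm R M}
  {e : M}

theorem isUnit_apply_self_of_isOrthoᵢ (hB : Function.Surjective B) {ι : Type*}
    (b : Basis ι R M) (hb : B.IsOrthoᵢ b) (i : ι) : IsUnit (B (b i) (b i)) := by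
  obtain ⟨x, hx⟩ := hB (b.coord i)
  have hflip : B.flip (b i) = B (b i) (b i) • b.coord i := b.ext fun j ↦ by
    rcases eq_or_ne j i with rfl | hji
    · simp
    · simp [hb hji, hji]
  refine .of_mul_eq_one (b.coord i x) ?_
  calc B (b i) (b i) * b.coord i x = B.flip (b i) x := by rw [hflip]; rfl
    _ = 1 := by simp [hx]

theorem exists_apply_eq_one [Free R M] [Nontrivial M] (hB : Function.Surjective B) :
    ∃ x y, B x y = 1 := by
  let b := Free.chooseBasis R M
  obtain ⟨i⟩ := b.index_nonempty
  obtain ⟨x, hx⟩ := hB (b.coord i)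
  exact ⟨x, b i, by simp [hx]⟩

noncomputable def projKer (he : IsUnit (B e e)) : M →ₗ[R] ker (B e) :=
  (LinearMap.id - (B e).smulRight ((↑he.unit⁻¹ : R) • e)).codRestrict _ fun z ↦ by
    simp only [mem_ker, LinearMap.sub_apply, LinearMap.id_apply, LinearMap.smulRight_apply,
      map_sub, map_smul, smul_eq_mul]
    linear_combination -B e z * he.val_inv_mul

theorem coe_projKer (he : IsUnit (B e e)) (z : M) :
    (projKer he z : M) = z - (↑he.unit⁻¹ * B e z) • e := by
  simp [projKer, mul_comm, mul_smul]

theorem projKer_of_mem (he : IsUnit (B e e)) {z : M} (hz : z ∈ ker (B e)) :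
    projKer he z = ⟨z, hz⟩ := by
  rw [mem_ker] at hz
  ext
  simp [coe_projKer, hz]

theorem apply_projKer (he : IsUnit (B e e)) {n : M} (hn : B n e = 0) (z : M) :
    B n (projKer he z) = B n z := by
  simp [coe_projKer, hn]

theorem finite_ker (he : IsUnit (B e e)) [Module.Finite R M] : Module.Finite R (ker (B e)) :=
  .of_surjective (projKer he) fun n ↦ ⟨n, projKer_of_mem he n.2⟩

theorem projective_ker (he : IsUnit (B e e)) [Projective R M] : Projective R (ker (B e)) :=
  .of_split (ker (B e)).subtype (projKer he) (LinearMap.ext fun n ↦ projKer_of_mem he n.2)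

theorem bijective_restrict_ker (he : IsUnit (B e e)) (hB : B.IsSymm)
    (hnd : Function.Bijective B) :
    Function.Bijective (B.restrict (ker (B e))) := by
  have hperp (n : ker (B e)) : B n e = 0 := by rw [hB.eq]; exact n.2
  constructor
  · intro n₁ n₂ h
    refine Subtype.ext (hnd.injective (LinearMap.ext fun z ↦ ?_))
    rw [← apply_projKer he (hperp n₁), ← apply_projKer he (hperp n₂)]
    exact LinearMap.congr_fun h (projKer he z)
  · intro f
    obtain ⟨m, hm⟩ := hnd.surjective (f ∘ₗ projKer he)
    refine ⟨projKer he m, LinearMap.ext fun y ↦ ?_⟩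
    calc B (projKer he m) y = B y (projKer he m) := hB.eq _ _
      _ = B m y := by rw [apply_projKer he (hperp y), hB.eq]
      _ = f y := by rw [hm, LinearMap.comp_apply, projKer_of_mem he y.2]

noncomputable def basisConsKer (he : IsUnit (B e e)) {n : ℕ} (b : Basis (Fin n) R (ker (B e))) :
    Basis (Fin (n + 1)) R M :=
  .mkFinCons e b
    (fun c x hx hcx ↦ by
      have := congrArg (B e) hcx
      rw [map_add, map_smul, hx, add_zero, smul_eq_mul, map_zero] at this
      exact he.mul_left_eq_zero.mp this)
    (fun z ↦ ⟨-(↑he.unit⁻¹ * B e z), by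
      simpa [coe_projKer, sub_eq_add_neg] using (projKer he z).2⟩)

theorem isOrthoᵢ_basisConsKer (he : IsUnit (B e e)) (hB : B.IsSymm) {n : ℕ}
    {b : Basis (Fin n) R (ker (B e))}
    (hb : (B.restrict (ker (B e))).IsOrthoᵢ b) : B.IsOrthoᵢ (basisConsKer he b) := by
  rw [isOrthoᵢ_def, basisConsKer, Basis.coe_mkFinCons]
  intro i j hij
  cases i using Fin.cases <;> cases j using Fin.cases
  · exact absurd rfl hij
  · exact (b _).2
  · simp [hB.eq]
  · exact hb (ne_of_apply_ne Fin.succ hij)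

theorem finrank_ker_add_one (he : IsUnit (B e e)) [IsLocalRing R] [Module.Finite R M]
    [Projective R M] :
    finrank R (ker (B e)) + 1 = finrank R M := by
  have := finite_ker he
  have := projective_ker he
  simpa using (finrank_eq_card_basis (basisConsKer he (finBasis R (ker (B e))))).symm

theorem exists_isUnit_apply_self_of_apply_eq_one [IsLocalRing R] (hB : B.IsSymm) {m x y : M}
    (hm : IsUnit (B m m)) (hx : B m x = 0) (hy : B m y = 0) (hxy : B x y = 1) :
    ∃ e z, IsUnit (B e e) ∧ B e z = 0 ∧ IsUnit (B z z) := by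
  by_cases hxx : IsUnit (B x x)
  · exact ⟨m, x, hm, hx, hxx⟩
  by_cases hyy : IsUnit (B y y)
  · exact ⟨m, y, hm, hy, hyy⟩
  have hxm : B x m = 0 := by rw [hB.eq]; exact hx
  have hyx : B y x = 1 := by rw [hB.eq]; exact hxy
  have hym : B y m = 0 := by rw [hB.eq]; exact hy
  set e := m + x
  have he : IsUnit (B e e) := by
    simpa [e, hx, hxm] using IsLocalRing.isUnit_add_of_not_isUnit hm hxx
  set u := he.unit⁻¹
  refine ⟨e, y - (u : R) • e, he, ?_, ?_⟩
  · simp only [map_sub, map_smul, smul_eq_mul]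
    have : B e y = 1 := by simp [e, hy, hxy]
    linear_combination this - he.val_inv_mul
  · have hz : B (y - (u : R) • e) (y - (u : R) • e) = -((u : R) + -B y y) := by
      simp only [map_sub, map_smul, LinearMap.sub_apply, LinearMap.smul_apply, smul_eq_mul]
      have h1 : B e y = 1 := by simp [e, hy, hxy]
      have h2 : B y e = 1 := by simp [e, hym, hyx]
      linear_combination (u : R) * he.val_inv_mul - (u : R) * h1 - (u : R) * h2
    rw [hz]
    exact (IsLocalRing.isUnit_add_of_not_isUnit u.isUnit (by rwa [IsUnit.neg_iff])).neg

theorem exists_isOrthoᵢ_basis [IsLocalRing R] [Module.Finite R M] [Projective R M]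
    (hB : B.IsSymm) (hnd : Function.Bijective B) (h : ∃ m, IsUnit (B m m)) :
    ∃ b : Basis (Fin (finrank R M)) R M, B.IsOrthoᵢ b := by
  induction hn : finrank R M generalizing M with
  | zero => exact ⟨finBasisOfFinrankEq R M hn, fun i ↦ i.elim0⟩
  | succ n ih =>
    obtain ⟨m, hm⟩ := h
    suffices ∃ e, ∃ he : IsUnit (B e e), ∃ b : Basis (Fin n) R (ker (B e)),
        (B.restrict (ker (B e))).IsOrthoᵢ b from
      let ⟨e, he, b, hb⟩ := this
      ⟨basisConsKer he b, isOrthoᵢ_basisConsKer he hB hb⟩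
    have := finite_ker hm
    have := projective_ker hm
    have hrank : finrank R (ker (B m)) = n := by have := finrank_ker_add_one hm; omega
    rcases n.eq_zero_or_pos with rfl | hpos
    · exact ⟨m, hm, finBasisOfFinrankEq R _ hrank, fun i ↦ i.elim0⟩
    have := (finrank_pos_iff_of_free R (ker (B m))).mp (hrank ▸ hpos)
    obtain ⟨x, y, hxy⟩ := exists_apply_eq_one (bijective_restrict_ker hm hB hnd).2
    obtain ⟨e, z, he, hz, hzz⟩ :=
      exists_isUnit_apply_self_of_apply_eq_one hB hm x.2 y.2 hxy
    have := finite_ker he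
    have := projective_ker he
    exact ⟨e, he, ih (hB.restrict _) (bijective_restrict_ker he hB hnd) ⟨⟨z, hz⟩, hzz⟩
      (by have := finrank_ker_add_one he; omega)⟩

end LinearMap.BilinForm

/-- **Statement 9.** Let `R` be a local ring and `(M, φ)` a nonzero symmetric bilinear space
over `R` (so `M` is free of rank `k ≥ 1`).  Then `M` admits an orthogonal basis if and only
if there exists `m ∈ M` with `φ(m,m)` a unit. -/
theorem statement9 (R : Type) [CommRing R] [IsLocalRing R]
    (V : SymBilSpace R) (hV : Nontrivial V.M) :
    Module.Free R V.M ∧ 0 < Module.finrank R V.M ∧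
    ((∃ b : Module.Basis (Fin (Module.finrank R V.M)) R V.M,
        ∀ i j, i ≠ j → V.form (b i) (b j) = 0) ↔
      ∃ m : V.M, IsUnit (V.form m m)) := by
  have := V.projective
  have := V.finite
  have hpos : 0 < finrank R V.M := (finrank_pos_iff_of_free R V.M).mpr hV
  refine ⟨inferInstance, hpos, fun ⟨b, hb⟩ ↦ ?_, fun h ↦ ?_⟩
  · exact ⟨b ⟨0, hpos⟩, BilinForm.isUnit_apply_self_of_isOrthoᵢ V.nondeg.2 b hb _⟩
  · exact BilinForm.exists_isOrthoᵢ_basis ⟨V.symm⟩ V.nondeg h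
end
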